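/- arXiv:1902.06913 — 4 statements merged into one kernel-verified Lean document; each statement's English description precedes it below -/
import Mathlib

section
/- Let S be a finite set of Q vectors in ℝ^N, and let Φ ∈ ℝ^{M×N} be a random matrix with i.i.d. Gaussian N(0, 1/M) entries. For 0 < ε < 1/2, with probability at least 1 - 2Q·exp(-ε²M/8), every x ∈ S satisfies (1-ε)‖x‖ ≤ ‖Φx‖ ≤ (1+ε)‖x‖. -/
/-!
For fixed `x ≠ 0`, the rows of `Φ` are independent, so the coordinates `(Φ x)ᵢ = ∑ⱼ Φᵢⱼ xⱼ` are
independent, and each is a sum of independent centred Gaussians, hence `N(0, ‖x‖² / M)`.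
Thus `‖Φ x‖²` is `‖x‖² / M` times a `χ²` variable with `M` degrees of freedom, whose moment
generating function at `t` is `(1 - 2 t ‖x‖² / M) ^ (-M / 2)`. The Chernoff bound at
`t = ± ε M / (4 ‖x‖²)` bounds each of the two tails `‖Φ x‖ ∉ [(1 - ε) ‖x‖, (1 + ε) ‖x‖]` by
`exp (-ε² M / 8)`, using `exp (-y) ≥ 1 - y` and `ε < 1/2`. A union bound over the `Q` points of
`S` concludes.
-/

open MeasureTheory ProbabilityTheory Real Measure Matrix
open scoped NNReal ENNReal

lemma exp_mul_inv_sqrt_le_exp {b c d : ℝ} (hb : 0 ≤ b) (h : 1 ≤ (1 - 2 * (c - d)) * b) :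
    exp c * (√b)⁻¹ ≤ exp d := by
  have hpos : 0 < 1 - 2 * (c - d) := by
    by_contra! hneg
    nlinarith
  have hexp : exp (2 * (c - d)) ≤ b := by
    have := add_one_le_exp (-(2 * (c - d)))
    have h1 : exp (2 * (c - d)) * exp (-(2 * (c - d))) = 1 := by rw [← exp_add]; simp
    nlinarith [exp_pos (2 * (c - d))]
  have hsqrt : exp (c - d) ≤ √b := by
    rw [show c - d = 2 * (c - d) / 2 by ring, exp_half]
    exact sqrt_le_sqrt hexp
  have hb' : 0 < √b := (exp_pos _).trans_le hsqrt
  rw [← div_eq_mul_inv, div_le_iff₀ hb']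
  calc exp c = exp (c - d) * exp d := by rw [← exp_add]; ring_nf
    _ ≤ √b * exp d := by gcongr
    _ = exp d * √b := mul_comm _ _

lemma ProbabilityTheory.iIndepFun.curry {Ω ι κ β : Type*} [MeasurableSpace Ω] [MeasurableSpace β]
    {P : Measure Ω} {X : ι × κ → Ω → β} (mX : ∀ p, Measurable (X p)) (h : iIndepFun X P) :
    iIndepFun (fun i ω j ↦ X (i, j) ω) P := by
  have := h.isProbabilityMeasure
  have (p : ι × κ) : IsProbabilityMeasure (P.map (X p)) :=
    isProbabilityMeasure_map (mX p).aemeasurable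
  rw [iIndepFun_iff_map_fun_eq_infinitePi_map (fun i ↦ measurable_pi_lambda _ fun j ↦ mX _)]
  have hrow i : P.map (fun ω j ↦ X (i, j) ω) = infinitePi fun j ↦ P.map (X (i, j)) :=
    (h.precomp (Prod.mk_right_injective i)).map_fun_eq_infinitePi_map fun j ↦ mX _
  simp_rw [hrow, ← infinitePi_map_curry (fun i j ↦ P.map (X (i, j))),
    ← h.map_fun_eq_infinitePi_map mX]
  rw [map_map (by fun_prop) (measurable_pi_lambda _ mX)]
  rfl

lemma ProbabilityTheory.iIndepFun.map_sum_eq_gaussianReal {Ω ι : Type*} [MeasurableSpace Ω]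
    {P : Measure Ω} {X : ι → Ω → ℝ} (h : iIndepFun X P) (mX : ∀ i, Measurable (X i))
    {m : ι → ℝ} {v : ι → ℝ≥0} (hX : ∀ i, P.map (X i) = gaussianReal (m i) (v i))
    (s : Finset ι) :
    P.map (∑ i ∈ s, X i) = gaussianReal (∑ i ∈ s, m i) (∑ i ∈ s, v i) := by
  classical
  have := h.isProbabilityMeasure
  induction s using Finset.induction_on with
  | empty => simp [gaussianReal_zero_var, Pi.zero_def]
  | insert a s ha ih =>
    rw [Finset.sum_insert ha, Finset.sum_insert ha, Finset.sum_insert ha]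
    exact gaussianReal_add_gaussianReal_of_indepFun
      (h.indepFun_finsetSum_of_notMem mX ha).symm (hX a) ih

lemma integral_exp_mul_sq_gaussianReal {v : ℝ≥0} {t : ℝ} (ht : 2 * t * v < 1) :
    ∫ z, exp (t * z ^ 2) ∂gaussianReal 0 v = (√(1 - 2 * t * v))⁻¹ := by
  rcases eq_or_ne v 0 with rfl | hv
  · simp [gaussianReal_zero_var]
  have hv' : (0 : ℝ) < v := by positivity
  have hb : 0 < 1 - 2 * t * v := by linarith
  have hpdf (z : ℝ) : gaussianPDFReal 0 v z • exp (t * z ^ 2)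
      = (√(2 * π * v))⁻¹ * exp (-((1 - 2 * t * v) / (2 * v)) * z ^ 2) := by
    rw [gaussianPDFReal, smul_eq_mul, mul_assoc, ← exp_add]
    congr 2
    field_simp
    ring
  rw [integral_gaussianReal_eq_integral_smul hv]
  simp_rw [hpdf]
  rw [integral_const_mul, integral_gaussian, ← sqrt_inv, ← sqrt_inv, ← sqrt_mul (by positivity)]
  congr 1
  field_simp

section ChiSquare

variable {Ω ι : Type*} [MeasurableSpace Ω] {P : Measure Ω} {v : ℝ≥0} {t : ℝ}

lemma mgf_sq_of_map_eq_gaussianReal {X : Ω → ℝ} (mX : Measurable X)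
    (hX : P.map X = gaussianReal 0 v) (ht : 2 * t * v < 1) :
    mgf (fun ω ↦ X ω ^ 2) P t = (√(1 - 2 * t * v))⁻¹ := by
  rw [mgf, ← integral_exp_mul_sq_gaussianReal ht, ← hX,
    integral_map mX.aemeasurable (by fun_prop)]

lemma integrable_exp_mul_sq_of_map_eq_gaussianReal {X : Ω → ℝ} (mX : Measurable X)
    (hX : P.map X = gaussianReal 0 v) (ht : 2 * t * v < 1) :
    Integrable (fun ω ↦ exp (t * X ω ^ 2)) P := by
  refine Integrable.of_integral_ne_zero ?_
  rw [← mgf, mgf_sq_of_map_eq_gaussianReal mX hX ht]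
  exact inv_ne_zero (sqrt_pos.2 (by linarith)).ne'

variable [Fintype ι] {Y : ι → Ω → ℝ}

lemma mgf_sum_sq_of_map_eq_gaussianReal (hY : iIndepFun Y P) (mY : ∀ i, Measurable (Y i))
    (hYv : ∀ i, P.map (Y i) = gaussianReal 0 v) (ht : 2 * t * v < 1) :
    mgf (fun ω ↦ ∑ i, Y i ω ^ 2) P t = (√(1 - 2 * t * v))⁻¹ ^ Fintype.card ι := by
  have := (hY.comp (fun _ z ↦ z ^ 2) fun _ ↦ by fun_prop).mgf_sum (fun i ↦ (mY i).pow_const 2)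
    Finset.univ (t := t)
  rw [Finset.sum_fn] at this
  refine this.trans ?_
  simp [Function.comp_def, mgf_sq_of_map_eq_gaussianReal (mY _) (hYv _) ht]

variable [IsFiniteMeasure P]

lemma integrable_exp_mul_sum_sq_of_map_eq_gaussianReal (hY : iIndepFun Y P)
    (mY : ∀ i, Measurable (Y i)) (hYv : ∀ i, P.map (Y i) = gaussianReal 0 v)
    (ht : 2 * t * v < 1) :
    Integrable (fun ω ↦ exp (t * ∑ i, Y i ω ^ 2)) P := by
  have := (hY.comp (fun _ z ↦ z ^ 2) fun _ ↦ by fun_prop).integrable_exp_mul_sum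
    (fun i ↦ (mY i).pow_const 2) (s := Finset.univ)
    fun i _ ↦ integrable_exp_mul_sq_of_map_eq_gaussianReal (mY i) (hYv i) ht
  simpa [Finset.sum_fn] using this

variable {ε : ℝ}

lemma measureReal_sum_sq_ge_le (hY : iIndepFun Y P) (mY : ∀ i, Measurable (Y i))
    (hYv : ∀ i, P.map (Y i) = gaussianReal 0 v) (hv : v ≠ 0) (hε0 : 0 < ε) (hε : ε < 1 / 2) :
    P.real {ω | (1 + ε) ^ 2 * (Fintype.card ι * v) ≤ ∑ i, Y i ω ^ 2}
      ≤ exp (-ε ^ 2 * Fintype.card ι / 8) := by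
  set n := Fintype.card ι
  have hv' : (0 : ℝ) < v := by positivity
  obtain ⟨t, htv⟩ : ∃ t : ℝ, t * v = ε / 4 := ⟨ε / 4 / v, div_mul_cancel₀ _ hv'.ne'⟩
  have ht0 : 0 ≤ t := by nlinarith
  have ht : 2 * t * v = ε / 2 := by linarith
  calc P.real {ω | (1 + ε) ^ 2 * (n * v) ≤ ∑ i, Y i ω ^ 2}
      ≤ exp (-t * ((1 + ε) ^ 2 * (n * v))) * mgf (fun ω ↦ ∑ i, Y i ω ^ 2) P t :=
        measure_ge_le_exp_mul_mgf _ ht0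
          (integrable_exp_mul_sum_sq_of_map_eq_gaussianReal hY mY hYv (by linarith))
    _ = (exp (-(ε / 4) * (1 + ε) ^ 2) * (√(1 - ε / 2))⁻¹) ^ n := by
        rw [mgf_sum_sq_of_map_eq_gaussianReal hY mY hYv (by linarith), ht, mul_pow, ← exp_nat_mul]
        congr 2
        linear_combination (-(1 + ε) ^ 2 * n) * htv
    _ ≤ exp (-ε ^ 2 / 8) ^ n := by
        gcongr
        exact exp_mul_inv_sqrt_le_exp (by linarith)
          (by nlinarith [mul_pos hε0 hε0, mul_pos (mul_pos hε0 hε0) hε0])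
    _ = exp (-ε ^ 2 * n / 8) := by rw [← exp_nat_mul]; ring_nf

lemma measureReal_sum_sq_le_le (hY : iIndepFun Y P) (mY : ∀ i, Measurable (Y i))
    (hYv : ∀ i, P.map (Y i) = gaussianReal 0 v) (hv : v ≠ 0) (hε0 : 0 < ε) (hε : ε < 1 / 2) :
    P.real {ω | ∑ i, Y i ω ^ 2 ≤ (1 - ε) ^ 2 * (Fintype.card ι * v)}
      ≤ exp (-ε ^ 2 * Fintype.card ι / 8) := by
  set n := Fintype.card ι
  have hv' : (0 : ℝ) < v := by positivity
  obtain ⟨t, htv⟩ : ∃ t : ℝ, t * v = -(ε / 4) := ⟨-(ε / 4) / v, div_mul_cancel₀ _ hv'.ne'⟩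
  have ht0 : t ≤ 0 := by nlinarith
  have ht : 2 * t * v = -(ε / 2) := by linarith
  calc P.real {ω | ∑ i, Y i ω ^ 2 ≤ (1 - ε) ^ 2 * (n * v)}
      ≤ exp (-t * ((1 - ε) ^ 2 * (n * v))) * mgf (fun ω ↦ ∑ i, Y i ω ^ 2) P t :=
        measure_le_le_exp_mul_mgf _ ht0
          (integrable_exp_mul_sum_sq_of_map_eq_gaussianReal hY mY hYv (by linarith))
    _ = (exp ((ε / 4) * (1 - ε) ^ 2) * (√(1 + ε / 2))⁻¹) ^ n := by
        rw [mgf_sum_sq_of_map_eq_gaussianReal hY mY hYv (by linarith), ht, sub_neg_eq_add,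
          mul_pow, ← exp_nat_mul]
        congr 2
        linear_combination (-(1 - ε) ^ 2 * n) * htv
    _ ≤ exp (-ε ^ 2 / 8) ^ n := by
        gcongr
        exact exp_mul_inv_sqrt_le_exp (by linarith)
          (by nlinarith [mul_pos hε0 hε0, mul_pos (mul_pos hε0 hε0) hε0])
    _ = exp (-ε ^ 2 * n / 8) := by rw [← exp_nat_mul]; ring_nf

end ChiSquare

section GaussianMatrix

variable {Ω m n : Type*} [MeasurableSpace Ω] {μ : Measure Ω} [Fintype n]
  {Φ : Ω → Matrix m n ℝ}

lemma measurable_mulVec_apply (hmeas : ∀ i j, Measurable fun ω ↦ Φ ω i j) (x : n → ℝ) (i : m) :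
    Measurable fun ω ↦ (Φ ω *ᵥ x) i :=
  Finset.measurable_sum _ fun j _ ↦ (hmeas i j).mul_const _

lemma iIndepFun_mulVec_apply (hmeas : ∀ i j, Measurable fun ω ↦ Φ ω i j)
    (hindep : iIndepFun (fun (p : m × n) ω ↦ Φ ω p.1 p.2) μ) (x : n → ℝ) :
    iIndepFun (fun i ω ↦ (Φ ω *ᵥ x) i) μ :=
  (hindep.curry fun p ↦ hmeas p.1 p.2).comp (fun _ r ↦ r ⬝ᵥ x) fun _ ↦ by fun_prop

lemma map_mulVec_apply_eq_gaussianReal (hmeas : ∀ i j, Measurable fun ω ↦ Φ ω i j)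
    {v : ℝ≥0} (hdist : ∀ i j, μ.map (fun ω ↦ Φ ω i j) = gaussianReal 0 v)
    (hindep : iIndepFun (fun (p : m × n) ω ↦ Φ ω p.1 p.2) μ) (x : EuclideanSpace ℝ n) (i : m) :
    μ.map (fun ω ↦ (Φ ω *ᵥ x) i) = gaussianReal 0 (‖x‖₊ ^ 2 * v) := by
  have hrow : iIndepFun (fun j ω ↦ Φ ω i j * x j) μ :=
    (hindep.precomp (Prod.mk_right_injective i)).comp (fun j r ↦ r * x j) fun _ ↦ by fun_prop
  have hterm (j : n) : μ.map (fun ω ↦ Φ ω i j * x j)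
      = gaussianReal (x j * 0) (.mk (x j ^ 2) (sq_nonneg _) * v) := by
    rw [← gaussianReal_map_mul_const, ← hdist i j, map_map (measurable_mul_const _) (hmeas i j)]
    rfl
  have := hrow.map_sum_eq_gaussianReal (fun j ↦ (hmeas i j).mul_const _) hterm Finset.univ
  convert this using 2
  · ext ω
    simp [mulVec, dotProduct]
  · simp
  · ext
    push_cast
    rw [EuclideanSpace.norm_eq, sq_sqrt (by positivity), Finset.sum_mul]
    simp

lemma measureReal_sqrt_sum_sq_mulVec_notMem_Icc_le [IsProbabilityMeasure μ] {M : ℕ} (hM : 0 < M)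
    {Φ : Ω → Matrix (Fin M) n ℝ} (hmeas : ∀ i j, Measurable fun ω ↦ Φ ω i j)
    (hdist : ∀ i j, μ.map (fun ω ↦ Φ ω i j) = gaussianReal 0 (1 / (M : ℝ≥0)))
    (hindep : iIndepFun (fun (p : Fin M × n) ω ↦ Φ ω p.1 p.2) μ) (x : EuclideanSpace ℝ n)
    {ε : ℝ} (hε0 : 0 < ε) (hε : ε < 1 / 2) :
    μ.real {ω | √(∑ i, (Φ ω *ᵥ x) i ^ 2) ∉ Set.Icc ((1 - ε) * ‖x‖) ((1 + ε) * ‖x‖)}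
      ≤ 2 * exp (-ε ^ 2 * M / 8) := by
  rcases eq_or_ne x 0 with rfl | hx
  · simp [exp_nonneg]
  have hxpos : 0 < ‖x‖ := norm_pos_iff.2 hx
  have hv : ‖x‖₊ ^ 2 * (1 / (M : ℝ≥0)) ≠ 0 := by simp [hx, hM.ne']
  have hMv : (Fintype.card (Fin M) : ℝ) * (‖x‖₊ ^ 2 * (1 / (M : ℝ≥0)) : ℝ≥0) = ‖x‖ ^ 2 := by
    rw [Fintype.card_fin]
    push_cast
    field_simp
  have hY := iIndepFun_mulVec_apply hmeas hindep x
  have mY := measurable_mulVec_apply hmeas x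
  have hYv := map_mulVec_apply_eq_gaussianReal hmeas hdist hindep x
  have hlow := measureReal_sum_sq_le_le hY mY hYv hv hε0 hε
  have hup := measureReal_sum_sq_ge_le hY mY hYv hv hε0 hε
  rw [hMv, Fintype.card_fin] at hlow hup
  calc _ ≤ μ.real ({ω | ∑ i, (Φ ω *ᵥ x) i ^ 2 ≤ (1 - ε) ^ 2 * ‖x‖ ^ 2} ∪
          {ω | (1 + ε) ^ 2 * ‖x‖ ^ 2 ≤ ∑ i, (Φ ω *ᵥ x) i ^ 2}) := by
        refine measureReal_mono (fun ω hω ↦ ?_) (measure_ne_top _ _)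
        rw [Set.mem_ofPred_eq, Set.mem_Icc, not_and_or, not_le, not_le] at hω
        rcases hω with h | h
        · left
          have := (sqrt_lt' (by nlinarith)).1 h
          rw [Set.mem_ofPred_eq]
          nlinarith
        · right
          have := (lt_sqrt (by positivity)).1 h
          rw [Set.mem_ofPred_eq]
          nlinarith
    _ ≤ _ := measureReal_union_le _ _
    _ ≤ 2 * exp (-ε ^ 2 * M / 8) := by linarith

end GaussianMatrix

/-- Johnson–Lindenstrauss lemma with i.i.d. Gaussian matrix. -/
theorem stmt_0
    {Ω : Type*} [MeasurableSpace Ω] (μ : Measure Ω) [IsProbabilityMeasure μ]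
    (N M : ℕ) (hM : 0 < M)
    (Φ : Ω → Matrix (Fin M) (Fin N) ℝ)
    (hmeas : ∀ i j, Measurable fun ω => Φ ω i j)
    (hdist : ∀ i j, Measure.map (fun ω => Φ ω i j) μ
      = gaussianReal 0 (1 / (M : ℝ≥0)))
    (hindep : iIndepFun
      (fun (p : Fin M × Fin N) ω => Φ ω p.1 p.2) μ)
    (S : Finset (EuclideanSpace ℝ (Fin N)))
    (Q : ℕ) (hQ : S.card = Q)
    (ε : ℝ) (hε0 : 0 < ε) (hε : ε < 1/2) :
    ENNReal.ofReal (1 - 2 * Q * Real.exp (-(ε^2) * M / 8)) ≤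
      μ {ω | ∀ x ∈ S,
        (1 - ε) * ‖x‖ ≤ Real.sqrt (∑ i, ((Φ ω).mulVec x i)^2) ∧
        Real.sqrt (∑ i, ((Φ ω).mulVec x i)^2) ≤ (1 + ε) * ‖x‖} := by
  set good := {ω | ∀ x ∈ S, (1 - ε) * ‖x‖ ≤ √(∑ i, (Φ ω *ᵥ x) i ^ 2) ∧
    √(∑ i, (Φ ω *ᵥ x) i ^ 2) ≤ (1 + ε) * ‖x‖}
  have hbad : μ.real goodᶜ ≤ 2 * Q * exp (-ε ^ 2 * M / 8) :=
    calc μ.real goodᶜ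
        ≤ μ.real (⋃ x ∈ S,
            {ω | √(∑ i, (Φ ω *ᵥ x) i ^ 2) ∉ Set.Icc ((1 - ε) * ‖x‖) ((1 + ε) * ‖x‖)}) :=
          measureReal_mono (fun ω hω ↦ by simpa [good] using hω) (measure_ne_top _ _)
      _ ≤ ∑ x ∈ S, 2 * exp (-ε ^ 2 * M / 8) :=
          (measureReal_biUnion_finset_le _ _).trans <| Finset.sum_le_sum fun x _ ↦
            measureReal_sqrt_sum_sq_mulVec_notMem_Icc_le hM hmeas hdist hindep x hε0 hε
      _ = 2 * Q * exp (-ε ^ 2 * M / 8) := by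
          rw [Finset.sum_const, hQ, nsmul_eq_mul]
          ring
  have hunion : 1 ≤ μ.real good + μ.real goodᶜ := by
    simpa using measureReal_union_le (μ := μ) good goodᶜ
  refine ENNReal.ofReal_le_of_le_toReal ?_
  rw [← measureReal_def]
  linarith
end

section
/- Let Φ : ℝ^N → ℝ^M be linear, let K ⊆ ℝ^N, and suppose (1-ε)‖x₁-x₂‖ - c ≤ ‖Φ(x₁-x₂)‖ for all x₁, x₂ ∈ K, with 0 < ε < 1 and c ≥ 0. Let y = Φx* + w. If x̄ minimizes ‖x* - x‖ over x ∈ K and x̂ minimizes ‖y - Φx‖ over x ∈ K, then ‖x̄ - x̂‖ ≤ (2‖Φ(x* - x̄)‖ + 2‖w‖ + c)/(1-ε). -/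
/-- Deterministic recovery bound from a lower distance-preservation property. -/
theorem stmt_9
    (N M : ℕ)
    (Φ : EuclideanSpace ℝ (Fin N) →ₗ[ℝ] EuclideanSpace ℝ (Fin M))
    (K : Set (EuclideanSpace ℝ (Fin N)))
    (ε c : ℝ) (hε0 : 0 < ε) (hε1 : ε < 1) (hc : 0 ≤ c)
    (hrip : ∀ x₁ ∈ K, ∀ x₂ ∈ K,
      (1 - ε) * ‖x₁ - x₂‖ - c ≤ ‖Φ (x₁ - x₂)‖)
    (xstar : EuclideanSpace ℝ (Fin N)) (w : EuclideanSpace ℝ (Fin M))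
    (y : EuclideanSpace ℝ (Fin M)) (hy : y = Φ xstar + w)
    (xbar : EuclideanSpace ℝ (Fin N)) (hxbar : xbar ∈ K)
    (hxbarmin : ∀ x ∈ K, ‖xstar - xbar‖ ≤ ‖xstar - x‖)
    (xhat : EuclideanSpace ℝ (Fin N)) (hxhat : xhat ∈ K)
    (hxhatmin : ∀ x ∈ K, ‖y - Φ xhat‖ ≤ ‖y - Φ x‖) :
    ‖xbar - xhat‖ ≤ (2 * ‖Φ (xstar - xbar)‖ + 2 * ‖w‖ + c) / (1 - ε) := by
  have h1 : (1 - ε) * ‖xbar - xhat‖ - c ≤ ‖Φ (xbar - xhat)‖ := hrip _ hxbar _ hxhat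
  have h2 : ‖Φ (xbar - xhat)‖ ≤ ‖y - Φ xbar‖ + ‖y - Φ xhat‖ := by
    have : Φ (xbar - xhat) = (y - Φ xhat) - (y - Φ xbar) := by
      rw [map_sub]; abel
    rw [this]
    calc ‖(y - Φ xhat) - (y - Φ xbar)‖ ≤ ‖y - Φ xhat‖ + ‖y - Φ xbar‖ := norm_sub_le _ _
      _ = ‖y - Φ xbar‖ + ‖y - Φ xhat‖ := by ring
  have h3 : ‖y - Φ xhat‖ ≤ ‖y - Φ xbar‖ := hxhatmin _ hxbar
  have h4 : ‖y - Φ xbar‖ ≤ ‖Φ (xstar - xbar)‖ + ‖w‖ := by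
    have : y - Φ xbar = Φ (xstar - xbar) + w := by
      rw [hy, map_sub]; abel
    rw [this]; exact norm_add_le _ _
  have key : (1 - ε) * ‖xbar - xhat‖ ≤ 2 * ‖Φ (xstar - xbar)‖ + 2 * ‖w‖ + c := by
    nlinarith
  have hpos : 0 < 1 - ε := by linarith
  rw [le_div_iff₀ hpos]
  linarith [key]
end

section
/- Let Φ : ℝ^N → ℝ^M be linear with ‖Φv‖ ≤ (2+√(N/M))‖v‖ for all v, let K ⊆ ℝ^N satisfy the lower distance-preservation (1-ε)‖x₁-x₂‖ - c ≤ ‖Φ(x₁-x₂)‖ for all x₁,x₂ ∈ K (0 < ε < 1, c ≥ 0), and let y = Φx* + w. If x̄ = argmin_{x∈K}‖x*-x‖ and x̂ = argmin_{x∈K}‖y-Φx‖, then ‖x* - x̂‖ ≤ ((5 + 2√(N/M) - ε)/(1-ε))·‖x* - x̄‖ + (2/(1-ε))‖w‖ + c/(1-ε). -/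
/-- Combined deterministic recovery guarantee. -/
theorem stmt_10
    (N M : ℕ)
    (Φ : EuclideanSpace ℝ (Fin N) →ₗ[ℝ] EuclideanSpace ℝ (Fin M))
    (hop : ∀ v : EuclideanSpace ℝ (Fin N),
      ‖Φ v‖ ≤ (2 + Real.sqrt ((N : ℝ) / M)) * ‖v‖)
    (K : Set (EuclideanSpace ℝ (Fin N)))
    (ε c : ℝ) (hε0 : 0 < ε) (hε1 : ε < 1) (hc : 0 ≤ c)
    (hrip : ∀ x₁ ∈ K, ∀ x₂ ∈ K,
      (1 - ε) * ‖x₁ - x₂‖ - c ≤ ‖Φ (x₁ - x₂)‖)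
    (xstar : EuclideanSpace ℝ (Fin N)) (w : EuclideanSpace ℝ (Fin M))
    (y : EuclideanSpace ℝ (Fin M)) (hy : y = Φ xstar + w)
    (xbar : EuclideanSpace ℝ (Fin N)) (hxbar : xbar ∈ K)
    (hxbarmin : ∀ x ∈ K, ‖xstar - xbar‖ ≤ ‖xstar - x‖)
    (xhat : EuclideanSpace ℝ (Fin N)) (hxhat : xhat ∈ K)
    (hxhatmin : ∀ x ∈ K, ‖y - Φ xhat‖ ≤ ‖y - Φ x‖) :
    ‖xstar - xhat‖ ≤ ((5 + 2 * Real.sqrt ((N : ℝ) / M) - ε) / (1 - ε)) * ‖xstar - xbar‖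
      + (2 / (1 - ε)) * ‖w‖ + c / (1 - ε) := by
  set s := Real.sqrt ((N : ℝ) / M) with hs
  have hs0 : 0 ≤ s := Real.sqrt_nonneg _
  have h1ε : (0:ℝ) < 1 - ε := by linarith
  have hrip' := hrip xbar hxbar xhat hxhat
  have h2 : ‖Φ (xbar - xhat)‖ ≤ ‖y - Φ xbar‖ + ‖y - Φ xhat‖ := by
    have : Φ (xbar - xhat) = -(y - Φ xbar) + (y - Φ xhat) := by
      rw [map_sub]; abel
    rw [this]
    calc ‖-(y - Φ xbar) + (y - Φ xhat)‖ ≤ ‖-(y - Φ xbar)‖ + ‖y - Φ xhat‖ :=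
          norm_add_le _ _
      _ = ‖y - Φ xbar‖ + ‖y - Φ xhat‖ := by rw [norm_neg]
  have h3 : ‖y - Φ xhat‖ ≤ ‖y - Φ xbar‖ := hxhatmin xbar hxbar
  have h4 : ‖y - Φ xbar‖ ≤ (2 + s) * ‖xstar - xbar‖ + ‖w‖ := by
    have hrw : y - Φ xbar = Φ (xstar - xbar) + w := by
      rw [hy, map_sub]; abel
    rw [hrw]
    calc ‖Φ (xstar - xbar) + w‖ ≤ ‖Φ (xstar - xbar)‖ + ‖w‖ := norm_add_le _ _
      _ ≤ (2 + s) * ‖xstar - xbar‖ + ‖w‖ := by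
          have := hop (xstar - xbar); linarith
  have hkey : (1 - ε) * ‖xbar - xhat‖ ≤ 2 * (2 + s) * ‖xstar - xbar‖ + 2 * ‖w‖ + c := by
    linarith
  have htri : ‖xstar - xhat‖ ≤ ‖xstar - xbar‖ + ‖xbar - xhat‖ := by
    have : xstar - xhat = (xstar - xbar) + (xbar - xhat) := by abel
    rw [this]; exact norm_add_le _ _
  rw [div_mul_eq_mul_div, div_mul_eq_mul_div, ← add_div, ← add_div,
    le_div_iff₀ h1ε]
  nlinarith [norm_nonneg (xstar - xbar), norm_nonneg w]
end

section
/- Under the same assumptions as the upper bound (with a matching lower bound ‖Φ(a-b)‖ ≥ (1-ε)‖a-b‖ - δ on G(B^D(r_c), {v₀})), for all x₁, x₂ ∈ G(B^D(r_c), B^{L-D}(r_v)): ‖Φ(x₁-x₂)‖ ≥ (1-ε)‖x₁-x₂‖ - (6 + 2√(N/M) - 2ε)β - δ. -/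
/-- Structured-latent-variable distance preservation, lower bound. -/
theorem stmt_12
    (D Dv N M : ℕ)
    (G : EuclideanSpace ℝ (Fin D) → EuclideanSpace ℝ (Fin Dv) → EuclideanSpace ℝ (Fin N))
    (rc rv β ε δ : ℝ) (hε0 : 0 < ε) (hε1 : ε < 1) (hδ : 0 ≤ δ)
    (hβ : ∀ c ∈ Metric.ball (0 : EuclideanSpace ℝ (Fin D)) rc,
      ∀ v₁ ∈ Metric.ball (0 : EuclideanSpace ℝ (Fin Dv)) rv,
      ∀ v₂ ∈ Metric.ball (0 : EuclideanSpace ℝ (Fin Dv)) rv,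
      ‖G c v₁ - G c v₂‖ ≤ β)
    (v₀ : EuclideanSpace ℝ (Fin Dv)) (hv₀ : v₀ ∈ Metric.ball (0 : EuclideanSpace ℝ (Fin Dv)) rv)
    (Φ : EuclideanSpace ℝ (Fin N) →ₗ[ℝ] EuclideanSpace ℝ (Fin M))
    (hslice : ∀ a ∈ (fun c => G c v₀) '' Metric.ball (0 : EuclideanSpace ℝ (Fin D)) rc,
      ∀ b ∈ (fun c => G c v₀) '' Metric.ball (0 : EuclideanSpace ℝ (Fin D)) rc,
      (1 - ε) * ‖a - b‖ - δ ≤ ‖Φ (a - b)‖)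
    (hop : ∀ v : EuclideanSpace ℝ (Fin N),
      ‖Φ v‖ ≤ (2 + Real.sqrt ((N : ℝ) / M)) * ‖v‖) :
    ∀ c₁ ∈ Metric.ball (0 : EuclideanSpace ℝ (Fin D)) rc,
    ∀ c₂ ∈ Metric.ball (0 : EuclideanSpace ℝ (Fin D)) rc,
    ∀ v₁ ∈ Metric.ball (0 : EuclideanSpace ℝ (Fin Dv)) rv,
    ∀ v₂ ∈ Metric.ball (0 : EuclideanSpace ℝ (Fin Dv)) rv,
      (1 - ε) * ‖G c₁ v₁ - G c₂ v₂‖ - (6 + 2 * Real.sqrt ((N : ℝ) / M) - 2 * ε) * β - δ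
        ≤ ‖Φ (G c₁ v₁ - G c₂ v₂)‖ := by
  intro c₁ hc₁ c₂ hc₂ v₁ hv₁ v₂ hv₂
  set x := G c₁ v₁ - G c₂ v₂ with hx
  set y := G c₁ v₀ - G c₂ v₀ with hy
  have hβ0 : 0 ≤ β := le_trans (by simp) (hβ c₁ hc₁ v₁ hv₁ v₁ hv₁)
  have hxy : ‖x - y‖ ≤ 2 * β := by
    have h1 := hβ c₁ hc₁ v₁ hv₁ v₀ hv₀
    have h2 := hβ c₂ hc₂ v₂ hv₂ v₀ hv₀
    have : x - y = (G c₁ v₁ - G c₁ v₀) - (G c₂ v₂ - G c₂ v₀) := by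
      rw [hx, hy]; abel
    rw [this]
    calc ‖(G c₁ v₁ - G c₁ v₀) - (G c₂ v₂ - G c₂ v₀)‖
        ≤ ‖G c₁ v₁ - G c₁ v₀‖ + ‖G c₂ v₂ - G c₂ v₀‖ := norm_sub_le _ _
      _ ≤ 2 * β := by linarith
  have hΦxy : ‖Φ (x - y)‖ ≤ (2 + Real.sqrt ((N:ℝ)/M)) * (2*β) := by
    refine le_trans (hop _) ?_
    have hs : (0:ℝ) ≤ 2 + Real.sqrt ((N:ℝ)/M) := by positivity
    exact mul_le_mul_of_nonneg_left hxy hs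
  have hΦy : (1 - ε) * ‖y‖ - δ ≤ ‖Φ y‖ :=
    hslice _ ⟨c₁, hc₁, rfl⟩ _ ⟨c₂, hc₂, rfl⟩
  have hyx : ‖y‖ ≥ ‖x‖ - 2*β := by
    have := norm_sub_norm_le x y
    linarith [abs_le.mp (abs_norm_sub_norm_le x y)]
  have hΦx : ‖Φ y‖ - ‖Φ (x - y)‖ ≤ ‖Φ x‖ := by
    have : Φ y = Φ x - Φ (x - y) := by rw [← map_sub]; congr 1; abel
    rw [this]
    have := norm_sub_le (Φ x - Φ (x-y)) (Φ (x - y))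
    calc ‖Φ x - Φ (x-y)‖ - ‖Φ (x-y)‖ ≤ ‖Φ x‖ - 0 := by
          have h := norm_sub_norm_le (Φ x) (Φ (x-y))
          have : Φ x - Φ (x-y) = Φ x - Φ (x-y) := rfl
          nlinarith [norm_nonneg (Φ (x-y)), norm_sub_le (Φ x) (Φ (x-y)),
            abs_le.mp (abs_norm_sub_norm_le (Φ x) (Φ (x-y)))]
      _ = ‖Φ x‖ := sub_zero _
  have hε' : (0:ℝ) ≤ 1 - ε := by linarith
  nlinarith [Real.sqrt_nonneg ((N:ℝ)/M), mul_le_mul_of_nonneg_left hyx hε']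
end
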